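/- arXiv:1507.03762 — 3 statements merged into one kernel-verified Lean document; each statement's English description precedes it below -/
import Mathlib

section
/- For r ≥ 1 and 0 < γ < 1, the quantity Δ(γ, r) = −((1 + rγ) log₂(1 − γ/(1 + rγ)))/γ − log₂(e) is bounded above by 2 − log₂(e) < 0.56. -/
/-!
Put `x = 1 - γ / (1 + rγ)`, so that `1 - x = γ / (1 + rγ)` and `Δ + log₂ e = -log₂ x / (1 - x)`.
This is the slope of the convex function `-log` on the secant from `x` to `1`; it increases with
`x`, so on `1/2 ≤ x < 1` (equivalently `γ ≤ 1 + (r - 1)γ`) it is at most its value `2 log 2` at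
`x = 1/2`. In base `2` this is the bound `2`, and `2 - log₂ e < 0.56` because `log 2 < 1 / 1.44`.
-/

open Real

lemma neg_log_div_one_sub_le {x : ℝ} (hx : 1 / 2 ≤ x) (hx1 : x < 1) :
    -log x / (1 - x) ≤ 2 * log 2 := by
  have hslope := strictConcaveOn_log_Ioi.concaveOn.neg.secant_mono
    (a := 1) (x := 1 / 2) (y := x) (by norm_num) (by norm_num) (Set.mem_Ioi.2 (by linarith))
    (by norm_num) hx1.ne hx
  simp only [Pi.neg_apply, log_one, neg_zero, sub_zero, one_div, log_inv, neg_neg] at hslope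
  calc -log x / (1 - x) = -(-log x / (x - 1)) := by rw [← neg_sub x 1, div_neg]
    _ ≤ -(log 2 / (2⁻¹ - 1)) := neg_le_neg hslope
    _ = 2 * log 2 := by ring

lemma two_sub_logb_two_exp_one_lt : 2 - logb 2 (exp 1) < 0.56 := by
  have hlog2 : 0 < log 2 := log_pos one_lt_two
  have : (1.44 : ℝ) < 1 / log 2 := by
    rw [lt_div_iff₀ hlog2]
    linarith [log_two_lt_d9]
  rw [logb, log_exp]
  linarith

theorem stmt_5 (γ r : ℝ) (hγ0 : 0 < γ) (hγ1 : γ < 1) (hr : 1 ≤ r) :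
    -((1 + r * γ) * Real.logb 2 (1 - γ / (1 + r * γ))) / γ
        - Real.logb 2 (Real.exp 1) ≤ 2 - Real.logb 2 (Real.exp 1)
      ∧ (2 : ℝ) - Real.logb 2 (Real.exp 1) < 0.56 := by
  refine ⟨?_, two_sub_logb_two_exp_one_lt⟩
  have hs : 0 < 1 + r * γ := by nlinarith
  have hlog2 : 0 < log 2 := log_pos one_lt_two
  set x := 1 - γ / (1 + r * γ) with hx
  have hx_half : 1 / 2 ≤ x := by
    rw [hx, le_sub_comm, div_le_iff₀ hs]
    nlinarith
  have hx_lt_one : x < 1 := by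
    rw [hx, sub_lt_self_iff]
    positivity
  have hgap : 1 - x = γ / (1 + r * γ) := by rw [hx, sub_sub_cancel]
  have hrate : -((1 + r * γ) * logb 2 x) / γ = (-log x / (1 - x)) / log 2 := by
    rw [hgap, logb]
    field_simp
  have hbound : (-log x / (1 - x)) / log 2 ≤ 2 := by
    rw [div_le_iff₀ hlog2]
    exact neg_log_div_one_sub_le hx_half hx_lt_one
  linarith
end

section
/- The function Δ(β) defined implicitly by the derivative of the asymptotic rate bound R(β) = log₂(1 + ρ / ((Φ/(1−βζ)) · (ρ(1 − β(1−ξ²)) + 1))) with respect to β has a sign independent of β: sgn(dR/dβ) = sgn(ρ(1 − ξ²) − ζ(1 + ρ)). Consequently R(β) is monotone on [0,1] and is maximized at β = 0 or β = 1. -/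
/-!
The SINR inside the logarithm is a linear-fractional function of `β`,
`(ρ - ρζβ) / (Φ(ρ + 1) - Φρ(1 - ξ²)β)`, and the derivative of `(a - bx) / (c - dx)` is
`(ad - bc) / (c - dx)²`, whose numerator does not depend on `x`. Here it equals
`ρΦ (ρ(1 - ξ²) - ζ(1 + ρ))`, so `R'` is a positive multiple of this constant on `[0, 1]`,
and `R` is monotone there.
-/

open Real Set

lemma Real.sign_mul_of_pos {c : ℝ} (hc : 0 < c) (x : ℝ) : Real.sign (c * x) = Real.sign x := by
  rcases lt_trichotomy x 0 with hx | rfl | hx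
  · rw [Real.sign_of_neg hx, Real.sign_of_neg (mul_neg_of_pos_of_neg hc hx)]
  · simp
  · rw [Real.sign_of_pos hx, Real.sign_of_pos (mul_pos hc hx)]

lemma HasDerivAt.logb {f : ℝ → ℝ} {f' x : ℝ} (b : ℝ) (hf : HasDerivAt f f' x) (hx : f x ≠ 0) :
    HasDerivAt (fun y => logb b (f y)) (f' / (f x * Real.log b)) x := by
  simpa only [Real.logb, div_div] using (hf.log hx).div_const (Real.log b)

lemma hasDerivAt_sub_mul_div_sub_mul (a b c d x : ℝ) (hx : c - d * x ≠ 0) :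
    HasDerivAt (fun y => (a - b * y) / (c - d * y)) ((a * d - b * c) / (c - d * x) ^ 2) x := by
  have hnum := ((hasDerivAt_id' x).const_mul b).const_sub a
  have hden := ((hasDerivAt_id' x).const_mul d).const_sub c
  exact (hnum.div hden hx).congr_deriv (by ring)

lemma monotoneOn_or_antitoneOn_of_hasDerivAt_pos_mul {f : ℝ → ℝ} {s : Set ℝ} (hs : Convex ℝ s)
    (K : ℝ) (hf : ∀ x ∈ s, ∃ c, 0 < c ∧ HasDerivAt f (c * K) x) :
    MonotoneOn f s ∨ AntitoneOn f s := by
  choose! c hc hf using hf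
  have hcont : ContinuousOn f s := fun x hx => (hf x hx).continuousAt.continuousWithinAt
  have hf' : ∀ x ∈ interior s, HasDerivWithinAt f (c x * K) (interior s) x :=
    fun x hx => (hf x (interior_subset hx)).hasDerivWithinAt
  rcases le_or_gt 0 K with hK | hK
  · exact .inl <| monotoneOn_of_hasDerivWithinAt_nonneg hs hcont hf'
      fun x hx => mul_nonneg (hc x (interior_subset hx)).le hK
  · exact .inr <| antitoneOn_of_hasDerivWithinAt_nonpos hs hcont hf'
      fun x hx => mul_nonpos_of_nonneg_of_nonpos (hc x (interior_subset hx)).le hK.le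

lemma le_max_of_monotoneOn_or_antitoneOn {f : ℝ → ℝ} {a b : ℝ}
    (hf : MonotoneOn f (Icc a b) ∨ AntitoneOn f (Icc a b)) {x : ℝ} (hx : x ∈ Icc a b) :
    f x ≤ max (f a) (f b) := by
  have hab : a ≤ b := hx.1.trans hx.2
  rcases hf with hf | hf
  · exact le_max_of_le_right (hf hx (right_mem_Icc.2 hab) hx.2)
  · exact le_max_of_le_left (hf (left_mem_Icc.2 hab) hx hx.1)

noncomputable def sinr (ρ ζ Φ ξ2 β : ℝ) : ℝ := ρ * (1 - β * ζ) / (Φ * (ρ * (1 - β * (1 - ξ2)) + 1))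

section Rate

variable {ρ ζ Φ ξ2 β : ℝ}

lemma sinr_eq_sub_mul_div_sub_mul :
    sinr ρ ζ Φ ξ2 = fun β => (ρ - ρ * ζ * β) / (Φ * (ρ + 1) - Φ * ρ * (1 - ξ2) * β) := by
  funext β
  rw [sinr]
  ring

lemma exists_pos_hasDerivAt_logb_one_add_sinr (hρ : 0 < ρ) (hΦ : 0 < Φ) (hξ0 : 0 ≤ ξ2)
    (hζ1 : ζ < 1) (hβ : β ∈ Icc 0 1) :
    ∃ c, 0 < c ∧ HasDerivAt (fun β => logb 2 (1 + sinr ρ ζ Φ ξ2 β))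
      (c * (ρ * (1 - ξ2) - ζ * (1 + ρ))) β := by
  obtain ⟨hβ0, hβ1⟩ := hβ
  have hnum : 0 < ρ - ρ * ζ * β := by
    have : 0 < 1 - ζ * β := by rcases le_or_gt 0 ζ with hζ | hζ <;> nlinarith
    nlinarith
  have hden : 0 < Φ * (ρ + 1) - Φ * ρ * (1 - ξ2) * β := by
    have : 0 ≤ ρ * (1 - β + ξ2 * β) := by
      have := sub_nonneg.2 hβ1
      positivity
    nlinarith
  have hsinr : 0 < 1 + sinr ρ ζ Φ ξ2 β := by
    have : 0 < sinr ρ ζ Φ ξ2 β := by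
      rw [sinr_eq_sub_mul_div_sub_mul]
      exact div_pos hnum hden
    linarith
  have hsinr' := hasDerivAt_sub_mul_div_sub_mul ρ (ρ * ζ) (Φ * (ρ + 1)) (Φ * ρ * (1 - ξ2)) β
    hden.ne'
  rw [← sinr_eq_sub_mul_div_sub_mul] at hsinr'
  refine ⟨ρ * Φ / (Φ * (ρ + 1) - Φ * ρ * (1 - ξ2) * β) ^ 2 / ((1 + sinr ρ ζ Φ ξ2 β) * log 2),
    by positivity, ?_⟩
  exact (HasDerivAt.logb 2 (hsinr'.const_add 1) hsinr.ne').congr_deriv (by ring)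

end Rate

theorem stmt_6_general (ρ ζ Φ ξ2 : ℝ) (hρ : 0 < ρ) (hξ0 : 0 ≤ ξ2)
    (hζ1 : ζ < 1) (hΦ : 0 < Φ)
    (R : ℝ → ℝ)
    (hR : ∀ β : ℝ, R β =
      Real.logb 2 (1 + ρ / ((Φ / (1 - β * ζ)) * (ρ * (1 - β * (1 - ξ2)) + 1)))) :
    (∀ β ∈ Set.Icc (0 : ℝ) 1,
        Real.sign (deriv R β) = Real.sign (ρ * (1 - ξ2) - ζ * (1 + ρ)))
      ∧ (MonotoneOn R (Set.Icc 0 1) ∨ AntitoneOn R (Set.Icc 0 1))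
      ∧ ∀ β ∈ Set.Icc (0 : ℝ) 1, R β ≤ max (R 0) (R 1) := by
  obtain rfl : R = fun β => logb 2 (1 + sinr ρ ζ Φ ξ2 β) := by
    funext β
    rw [hR, sinr, div_mul_eq_mul_div, div_div_eq_mul_div]
  have hderiv := fun β (hβ : β ∈ Icc (0 : ℝ) 1) =>
    exists_pos_hasDerivAt_logb_one_add_sinr hρ hΦ hξ0 hζ1 hβ
  have hmono := monotoneOn_or_antitoneOn_of_hasDerivAt_pos_mul (convex_Icc 0 1) _ hderiv
  refine ⟨fun β hβ => ?_, hmono, fun β hβ => le_max_of_monotoneOn_or_antitoneOn hmono hβ⟩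
  obtain ⟨c, hc, hc'⟩ := hderiv β hβ
  rw [hc'.deriv, Real.sign_mul_of_pos hc]

theorem stmt_6 (ρ ζ Φ ξ2 : ℝ) (hρ : 0 < ρ) (hξ0 : 0 ≤ ξ2) (hξ1 : ξ2 < 1)
    (hζ0 : 0 < ζ) (hζ1 : ζ < 1) (hΦ : 0 < Φ)
    (R : ℝ → ℝ)
    (hR : ∀ β : ℝ, R β =
      Real.logb 2 (1 + ρ / ((Φ / (1 - β * ζ)) * (ρ * (1 - β * (1 - ξ2)) + 1)))) :
    (∀ β ∈ Set.Icc (0 : ℝ) 1,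
        Real.sign (deriv R β) = Real.sign (ρ * (1 - ξ2) - ζ * (1 + ρ)))
      ∧ (MonotoneOn R (Set.Icc 0 1) ∨ AntitoneOn R (Set.Icc 0 1))
      ∧ ∀ β ∈ Set.Icc (0 : ℝ) 1, R β ≤ max (R 0) (R 1) :=
  stmt_6_general ρ ζ Φ ξ2 hρ hξ0 hζ1 hΦ R hR
end

section
/- Beamforming asymptotically outperforms zero-forcing if and only if c_u/c_t > (1 − 2^(-c_f T/c_t)) · ρ/(1+ρ). -/
open Real

theorem stmt_7 (ρ c_u c_t c_f T : ℝ) (hρ : 0 < ρ) (hcu : 0 < c_u)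
    (hcuct : c_u ≤ c_t) (hcf : 0 < c_f) (hT : 0 < T)
    (x : ℝ) (hx : x = (2 : ℝ) ^ (-(c_f * T / c_t))) :
    (Real.logb 2 (1 + ρ * (c_t / c_u) * (1 - x) / (1 + ρ)) >
        Real.logb 2 (1 + ρ * (c_t / c_u - 1) * (1 - x) / (1 + ρ * x)))
      ↔ c_u / c_t > (1 - x) * (ρ / (1 + ρ)) := by
  have hct : 0 < c_t := lt_of_lt_of_le hcu hcuct
  have hxpos : 0 < x := by rw [hx]; positivity
  have hx1 : x < 1 := by
    rw [hx]
    have h0 : -(c_f * T / c_t) < 0 := by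
      have : 0 < c_f * T / c_t := by positivity
      linarith
    calc (2:ℝ) ^ (-(c_f * T / c_t)) < 2 ^ (0:ℝ) :=
          Real.rpow_lt_rpow_of_exponent_lt one_lt_two h0
      _ = 1 := Real.rpow_zero 2
  clear hx hcf hT
  obtain ⟨r, hr1, rfl⟩ : ∃ r, 1 ≤ r ∧ c_t = r * c_u :=
    ⟨c_t / c_u, (one_le_div hcu).mpr hcuct, (div_mul_cancel₀ c_t hcu.ne').symm⟩
  have hrpos : 0 < r := lt_of_lt_of_le one_pos hr1
  have hdiv : r * c_u / c_u = r := mul_div_cancel_right₀ r hcu.ne'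
  rw [hdiv]
  have h1ρ : (0:ℝ) < 1 + ρ := by linarith
  have h1ρx : (0:ℝ) < 1 + ρ * x := by nlinarith
  have hBpos : (0:ℝ) < 1 + ρ * (r - 1) * (1 - x) / (1 + ρ * x) := by
    have : 0 ≤ ρ * (r - 1) * (1 - x) / (1 + ρ * x) := by
      exact div_nonneg (mul_nonneg (mul_nonneg hρ.le (by linarith)) (by linarith)) h1ρx.le
    linarith
  have hApos : (0:ℝ) < 1 + ρ * r * (1 - x) / (1 + ρ) := by
    have : 0 ≤ ρ * r * (1 - x) / (1 + ρ) := by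
      exact div_nonneg (mul_nonneg (mul_nonneg hρ.le (by linarith)) (by linarith)) h1ρ.le
    linarith
  rw [gt_iff_lt, Real.logb_lt_logb_iff (b := 2) one_lt_two hBpos hApos,
    _root_.add_lt_add_iff_left, div_lt_div_iff₀ h1ρx h1ρ, gt_iff_lt,
    show (1 - x) * (ρ / (1 + ρ)) = (1 - x) * ρ / (1 + ρ) from (mul_div_assoc _ _ _).symm,
    div_lt_div_iff₀ h1ρ (mul_pos hrpos hcu)]
  have hpx : 0 < ρ * (1 - x) := mul_pos hρ (sub_pos.mpr hx1)
  constructor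
  · intro h
    nlinarith [mul_pos hcu hpx]
  · intro h
    nlinarith [mul_pos hpx hcu, mul_pos (mul_pos hpx hcu) hxpos,
      mul_pos (mul_pos hpx hpx) hcu]
end
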